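/- arXiv:2309.02006 — 2 statements merged into one kernel-verified Lean document; each statement's English description precedes it below -/
import Mathlib

section
/- Let M be a symmetric N×N real matrix (N ≥ 3) with constant row sums that leaves invariant the subspaces S_{N−1} = {x : x₁ = ⋯ = x_{N−2} = x_N} and S_N = {x : x₁ = ⋯ = x_{N−1}}. Then M e_{N−1} and M e_N are, after exchanging their (N−1)-th and N-th entries appropriately, equal: explicitly, the columns satisfy m_{i,N−1} = m_{i,N} for i ≤ N−2, m_{N−1,N−1} = m_{N,N}, and m_{N,N−1} = m_{N−1,N}. Consequently M acts identically on the directions e_{N−1} mod Δ and e_N mod Δ, and M cannot have eigenvalues of opposite sign on the complements of Δ in S_{N−1} and S_N. -/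
theorem stmt_17 (N : ℕ) (hN : 3 ≤ N) (M : Matrix (Fin N) (Fin N) ℝ)
    (hsym : M.IsSymm)
    (hrow : ∃ r : ℝ, ∀ i : Fin N, ∑ j, M i j = r)
    -- p is the index N−1 (1-based), q is the index N (1-based)
    (p : Fin N) (q : Fin N) (hp : (p : ℕ) = N - 2) (hq : (q : ℕ) = N - 1)
    -- invariance of S_{N−1} = {x : all coordinates except p are equal}
    (hSp : ∀ x : Fin N → ℝ, (∀ i j : Fin N, i ≠ p → j ≠ p → x i = x j) →
      ∀ i j : Fin N, i ≠ p → j ≠ p → M.mulVec x i = M.mulVec x j)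
    -- invariance of S_N = {x : all coordinates except q are equal}
    (hSq : ∀ x : Fin N → ℝ, (∀ i j : Fin N, i ≠ q → j ≠ q → x i = x j) →
      ∀ i j : Fin N, i ≠ q → j ≠ q → M.mulVec x i = M.mulVec x j) :
    (∀ i : Fin N, i ≠ p → i ≠ q → M i p = M i q) ∧
    M p p = M q q ∧ M q p = M p q ∧
    -- M acts identically on e_p mod Δ and e_q mod Δ
    (∃ κ : ℝ, M.mulVec (Pi.single p 1) - M.mulVec (Pi.single q 1) =
      κ • (Pi.single p 1 - Pi.single q 1)) := by
  obtain ⟨r, hrow⟩ := hrow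
  have hpq : p ≠ q := by
    intro h
    rw [Fin.ext_iff, hp, hq] at h
    omega
  have hsingle : ∀ (t : Fin N) (i j : Fin N), i ≠ t → j ≠ t →
      (Pi.single t 1 : Fin N → ℝ) i = (Pi.single t 1 : Fin N → ℝ) j := by
    intro t i j hi hj
    rw [Pi.single_eq_of_ne hi, Pi.single_eq_of_ne hj]
  have hmul : ∀ (t : Fin N) (i : Fin N), M.mulVec (Pi.single t 1) i = M i t := by
    intro t i
    simp [Matrix.mulVec_single]
  have hsym' : ∀ i j, M i j = M j i := fun i j => Matrix.IsSymm.apply hsym j i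
  have hcolp : ∀ i : Fin N, i ≠ p → M i p = M q p := by
    intro i hi
    have := hSp (Pi.single p 1) (hsingle p) i q hi hpq.symm
    simpa [hmul] using this
  have hcolq : ∀ i : Fin N, i ≠ q → M i q = M p q := by
    intro i hi
    have := hSq (Pi.single q 1) (hsingle q) i p hi hpq
    simpa [hmul] using this
  have hqp : M q p = M p q := hsym' q p
  have key : ∀ (t : Fin N) (c : ℝ), (∀ j, j ≠ t → M t j = c) →
      r = M t t + ((N : ℝ) - 1) * c := by
    intro t c hc
    rw [← hrow t, ← Finset.sum_erase_add _ _ (Finset.mem_univ t)]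
    have h1 : ∑ j ∈ Finset.univ.erase t, M t j = ((N : ℝ) - 1) * c := by
      rw [Finset.sum_congr rfl (fun j hj => hc j (Finset.ne_of_mem_erase hj)),
        Finset.sum_const, Finset.card_erase_of_mem (Finset.mem_univ t)]
      rw [nsmul_eq_mul, Finset.card_univ, Fintype.card_fin,
        Nat.cast_sub (by omega : 1 ≤ N)]
      simp
    rw [h1]
    ring
  have keyp : r = M p p + ((N : ℝ) - 1) * M q p :=
    key p (M q p) (fun j hj => (hsym' p j).trans (hcolp j hj))
  have keyq : r = M q q + ((N : ℝ) - 1) * M q p := by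
    have := key q (M p q) (fun j hj => (hsym' q j).trans (hcolq j hj))
    rwa [← hqp] at this
  have hpp : M p p = M q q := by linarith
  refine ⟨fun i hip hiq => ?_, hpp, hqp, ⟨M p p - M p q, ?_⟩⟩
  · rw [hcolp i hip, hqp, ← hcolq i hiq]
  · funext i
    simp only [Pi.sub_apply, Pi.smul_apply, smul_eq_mul, hmul]
    by_cases hip : i = p
    · subst hip
      rw [Pi.single_eq_same, Pi.single_eq_of_ne hpq]
      ring
    · by_cases hiq : i = q
      · subst hiq
        rw [hcolp i hip, hqp, hpp, Pi.single_eq_same, Pi.single_eq_of_ne hpq.symm]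
        ring
      · rw [hcolp i hip, hqp, ← hcolq i hiq]
        simp [Pi.single_eq_of_ne hip, Pi.single_eq_of_ne hiq]
end

section
/- Consider ẋ_k = F(x_k) + Σ over hyperedges e of order m with k ∈ H(e) of G^{(m)}(x_k; x_{T(e)}) on a hypergraph with vertex set {1,…,N}, with coupling homogeneous in each order. The diagonal Δ = {x₁ = ⋯ = x_N} is invariant for every choice of F and the G^{(m)} if and only if for each order m, the number N(m;k) of order-m hyperedges whose head contains vertex k is independent of k. -/
open Finset in
theorem stmt_18 (N : ℕ) (ε : Type) (E : Finset ε)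
    (T : ε → Finset (Fin N)) (H : ε → Finset (Fin N)) :
    -- Δ is invariant for every choice of F and G^{(m)} (the coupling function of
    -- each order m is applied to the state of the head node and the multiset of
    -- tail states) iff ...
    (∀ (F : ℝ → ℝ) (G : ℕ → ℝ → Multiset ℝ → ℝ) (z : ℝ) (k l : Fin N),
        F z + ∑ e ∈ E.filter (fun e => k ∈ H e),
            G ((T e).card + 1) z ((T e).val.map fun _ => z)
      = F z + ∑ e ∈ E.filter (fun e => l ∈ H e),
            G ((T e).card + 1) z ((T e).val.map fun _ => z))
    ↔
    -- ... for each order m the number of order-m hyperedges whose head contains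
    -- vertex k is independent of k.
    (∀ (m : ℕ) (k l : Fin N),
        (E.filter fun e => (T e).card + 1 = m ∧ k ∈ H e).card
      = (E.filter fun e => (T e).card + 1 = m ∧ l ∈ H e).card) := by
  constructor
  · intro h m k l
    have h' := h 0 (fun m' _ _ => if m' = m then (1:ℝ) else 0) 0 k l
    simp only [Pi.zero_apply, zero_add, Finset.sum_ite_eq, Finset.sum_boole] at h'
    rw [Finset.filter_filter, Finset.filter_filter] at h'
    have := Nat.cast_injective (R := ℝ) h'
    simpa [and_comm] using this
  · intro h F G z k l
    congr 1
    have key : ∀ k : Fin N,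
        ∑ e ∈ E.filter (fun e => k ∈ H e),
            G ((T e).card + 1) z ((T e).val.map fun _ => z)
        = ∑ c ∈ E.image (fun e => (T e).card),
            ((E.filter (fun e => (T e).card + 1 = c + 1 ∧ k ∈ H e)).card : ℝ)
              * G (c + 1) z (Multiset.replicate c z) := by
      intro k
      rw [← Finset.sum_fiberwise_of_maps_to (g := fun e => (T e).card)
          (fun e he => Finset.mem_image_of_mem (fun e => (T e).card) (Finset.mem_filter.mp he).1)]
      refine Finset.sum_congr rfl fun c hc => ?_
      rw [Finset.filter_filter]
      rw [Finset.sum_congr rfl (fun e he => ?_), Finset.sum_const, nsmul_eq_mul]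
      · congr 2
        apply congrArg Finset.card
        apply Finset.filter_congr
        intro e he
        constructor
        · rintro ⟨h1, h2⟩; exact ⟨by omega, h1⟩
        · rintro ⟨h1, h2⟩; exact ⟨h2, by omega⟩
      · obtain ⟨-, hce⟩ := Finset.mem_filter.mp he
        rw [Multiset.map_const',
          show Multiset.card (T e).val = (T e).card from rfl, hce.2]
    rw [key k, key l]
    refine Finset.sum_congr rfl fun c _ => ?_
    rw [h (c + 1) k l]
end
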